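/- arXiv:2307.02764 — 3 statements merged into one kernel-verified Lean document; each statement's English description precedes it below -/
import Mathlib

section
/- The Bayes-optimal deferral rule minimizing the two-model cascade risk R(r; h1, h2) = Pr(y ≠ h1(x), r(x)=0) + Pr(y ≠ h2(x), r(x)=1) + c·Pr(r(x)=1) over all measurable r : X → {0,1} is r*(x) = 1[ η_{h2(x)}(x) − η_{h1(x)}(x) > c ], where η_{y'}(x) = Pr(y = y' | x). That is, for every deferral rule r, R(r*; h1, h2) ≤ R(r; h1, h2). -/
open MeasureTheory
open scoped Classical

/-- The cascade risk `R(r; h1, h2) = Pr(y ≠ h1(x), r(x)=0) + Pr(y ≠ h2(x), r(x)=1)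
+ c · Pr(r(x)=1)`, expressed via the class-posterior `η`. -/
noncomputable def cascadeRisk {X : Type*} [MeasurableSpace X] {L : ℕ}
    (μ : Measure X) (η : X → Fin L → ℝ) (h1 h2 : X → Fin L) (c : ℝ)
    (r : X → Bool) : ℝ :=
  (∫ x, (if r x then 0 else 1 - η x (h1 x)) ∂μ)
    + (∫ x, (if r x then 1 - η x (h2 x) else 0) ∂μ)
    + c * (μ {x | r x = true}).toReal

section Aux

variable {X : Type*} [MeasurableSpace X] {L : ℕ}

lemma integrable_ite_aux (μ : Measure X) [IsProbabilityMeasure μ]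
    (r : X → Bool) (hr : Measurable r) (a b : X → ℝ)
    (ha : Measurable a) (hb : Measurable b) (C : ℝ)
    (hCa : ∀ x, |a x| ≤ C) (hCb : ∀ x, |b x| ≤ C) :
    Integrable (fun x => if r x then a x else b x) μ := by
  have hm : Measurable (fun x => if r x then a x else b x) :=
    Measurable.ite (hr (measurableSet_singleton true)) ha hb
  refine ⟨hm.aestronglyMeasurable, ?_⟩
  apply HasFiniteIntegral.of_bounded (C := C)
  filter_upwards with x
  by_cases h : r x <;> simp [h, hCa x, hCb x]

lemma cascadeRisk_eq (μ : Measure X) [IsProbabilityMeasure μ]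
    (η : X → Fin L → ℝ) (h1 h2 : X → Fin L) (c : ℝ)
    (hη : ∀ x y, η x y ∈ Set.Icc (0 : ℝ) 1)
    (hη1 : Measurable fun x => η x (h1 x))
    (hη2 : Measurable fun x => η x (h2 x))
    (r : X → Bool) (hr : Measurable r) :
    cascadeRisk μ η h1 h2 c r
      = ∫ x, (if r x then 1 - η x (h2 x) + c else 1 - η x (h1 x)) ∂μ := by
  have hbnd1 : ∀ x, |1 - η x (h1 x)| ≤ 1 + |c| := by
    intro x
    have := hη x (h1 x)
    rw [abs_le]
    constructor <;> [nlinarith [abs_nonneg c, this.1, this.2]; nlinarith [abs_nonneg c, this.1, this.2]]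
  have hbnd2 : ∀ x, |1 - η x (h2 x)| ≤ 1 + |c| := by
    intro x
    have := hη x (h2 x)
    rw [abs_le]
    constructor <;> nlinarith [abs_nonneg c, this.1, this.2]
  have hbnd2c : ∀ x, |1 - η x (h2 x) + c| ≤ 1 + |c| := by
    intro x
    rw [abs_le]
    constructor <;> nlinarith [neg_abs_le c, le_abs_self c, (hη x (h2 x)).1, (hη x (h2 x)).2]
  have hz : ∀ x : X, |(0 : ℝ)| ≤ 1 + |c| := by
    intro x; simp; positivity
  have hI1 : Integrable (fun x => if r x then (0:ℝ) else 1 - η x (h1 x)) μ :=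
    integrable_ite_aux μ r hr _ _ measurable_const (measurable_const.sub hη1) (1 + |c|) hz hbnd1
  have hI2 : Integrable (fun x => if r x then 1 - η x (h2 x) else (0:ℝ)) μ :=
    integrable_ite_aux μ r hr _ _ (measurable_const.sub hη2) measurable_const (1 + |c|) hbnd2 hz
  have hI3 : Integrable (fun x => if r x then c else (0:ℝ)) μ :=
    integrable_ite_aux μ r hr _ _ measurable_const measurable_const (1 + |c|)
      (fun x => by nlinarith [le_abs_self c, neg_abs_le c, abs_nonneg c, abs_nonneg c]) hz
  have hmeas : MeasurableSet {x | r x = true} := hr (measurableSet_singleton true)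
  have hc3 : c * (μ {x | r x = true}).toReal = ∫ x, (if r x then c else (0:ℝ)) ∂μ := by
    have : (fun x => if r x then c else (0:ℝ))
        = Set.indicator {x | r x = true} (fun _ => c) := by
      funext x
      by_cases h : r x <;> simp [Set.indicator, h]
    rw [this, integral_indicator_const _ hmeas]
    simp [mul_comm, measureReal_def]
  rw [cascadeRisk, hc3,
    show (fun x => if r x then 1 - η x (h2 x) + c else 1 - η x (h1 x))
      = fun x => ((if r x then (0:ℝ) else 1 - η x (h1 x))
          + (if r x then 1 - η x (h2 x) else 0)) + (if r x then c else 0) from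
      funext fun x => by by_cases h : r x <;> simp [h] <;> ring]
  have e1 := integral_add hI1 hI2
  have e2 := integral_add (hI1.add hI2) hI3
  simp only [Pi.add_apply] at e1 e2
  rw [e2, e1]

end Aux

/-- The Bayes-optimal deferral rule is `r*(x) = 1[η_{h2(x)}(x) − η_{h1(x)}(x) > c]`:
it achieves risk no larger than any other deferral rule. -/
theorem bayes_optimal_deferral_rule
    {X : Type*} [MeasurableSpace X] {L : ℕ}
    (μ : Measure X) [IsProbabilityMeasure μ]
    (η : X → Fin L → ℝ) (h1 h2 : X → Fin L) (c : ℝ)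
    (hc : 0 < c)
    (hη : ∀ x y, η x y ∈ Set.Icc (0 : ℝ) 1)
    (hη1 : Measurable fun x => η x (h1 x))
    (hη2 : Measurable fun x => η x (h2 x)) :
    ∀ r : X → Bool, Measurable r →
      cascadeRisk μ η h1 h2 c
          (fun x => if η x (h2 x) - η x (h1 x) > c then true else false)
        ≤ cascadeRisk μ η h1 h2 c r := by
  intro r hr
  set rstar : X → Bool := fun x => if η x (h2 x) - η x (h1 x) > c then true else false with hrstar
  have hrs : Measurable rstar := by
    have hset : MeasurableSet {x | η x (h2 x) - η x (h1 x) > c} :=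
      measurableSet_lt measurable_const (hη2.sub hη1)
    exact Measurable.ite hset measurable_const measurable_const
  rw [cascadeRisk_eq μ η h1 h2 c hη hη1 hη2 r hr,
      cascadeRisk_eq μ η h1 h2 c hη hη1 hη2 rstar hrs]
  have hbnd : ∀ (s : X → Bool) (hs : Measurable s),
      Integrable (fun x => if s x then 1 - η x (h2 x) + c else 1 - η x (h1 x)) μ := by
    intro s hs
    apply integrable_ite_aux μ s hs _ _ ((measurable_const.sub hη2).add measurable_const)
      (measurable_const.sub hη1) (1 + |c|)
    · intro x
      simp only [Pi.add_apply, Pi.sub_apply]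
      rw [abs_le]
      constructor <;> nlinarith [neg_abs_le c, le_abs_self c, (hη x (h2 x)).1, (hη x (h2 x)).2]
    · intro x
      simp only [Pi.sub_apply]
      rw [abs_le]
      constructor <;> nlinarith [abs_nonneg c, (hη x (h1 x)).1, (hη x (h1 x)).2]
  apply integral_mono (hbnd rstar hrs) (hbnd r hr)
  intro x
  dsimp only
  by_cases hst : η x (h2 x) - η x (h1 x) > c
  · have hx : rstar x = true := by simp [rstar, hst]
    rw [hx]
    by_cases h : r x <;> simp [h] <;> linarith
  · have hx : rstar x = false := by simp [rstar, hst]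
    rw [hx]
    push_neg at hst
    by_cases h : r x <;> simp [h] <;> linarith
end

section
/- If η_{h2(x)}(x) − η_{h1(x)}(x) > c for P-almost every x, then the always-defer rule r ≡ 1 is optimal for the cascade risk, with optimal risk Pr(y ≠ h2(x)) + c. -/
open MeasureTheory

/-- If `η_{h2(x)}(x) − η_{h1(x)}(x) > c` for P-almost every `x`, then the always-defer
rule is optimal for the cascade risk, with optimal risk `Pr(y ≠ h2(x)) + c`. -/
theorem always_defer_optimal_when_gain_large
    {X : Type*} [MeasurableSpace X] {L : ℕ}
    (μ : Measure X) [IsProbabilityMeasure μ]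
    (η : X → Fin L → ℝ) (h1 h2 : X → Fin L) (c : ℝ)
    (hc : 0 < c)
    (hη : ∀ x y, η x y ∈ Set.Icc (0 : ℝ) 1)
    (hη1 : Measurable fun x => η x (h1 x))
    (hη2 : Measurable fun x => η x (h2 x))
    (hlarge : ∀ᵐ x ∂μ, η x (h2 x) - η x (h1 x) > c) :
    (∀ r : X → Bool, Measurable r →
      cascadeRisk μ η h1 h2 c (fun _ => true) ≤ cascadeRisk μ η h1 h2 c r)
    ∧ cascadeRisk μ η h1 h2 c (fun _ => true)
        = (∫ x, (1 - η x (h2 x)) ∂μ) + c := by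
  have hint1 : Integrable (fun x => 1 - η x (h1 x)) μ := by
    refine (integrable_const (1:ℝ)).sub ?_
    refine (integrable_const (1:ℝ)).mono' hη1.aestronglyMeasurable ?_
    filter_upwards with x
    rw [Real.norm_eq_abs, abs_le]
    exact ⟨by linarith [(hη x (h1 x)).1], (hη x (h1 x)).2⟩
  have hint2 : Integrable (fun x => 1 - η x (h2 x)) μ := by
    refine (integrable_const (1:ℝ)).sub ?_
    refine (integrable_const (1:ℝ)).mono' hη2.aestronglyMeasurable ?_
    filter_upwards with x
    rw [Real.norm_eq_abs, abs_le]
    exact ⟨by linarith [(hη x (h2 x)).1], (hη x (h2 x)).2⟩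
  have htrue : cascadeRisk μ η h1 h2 c (fun _ => true)
      = (∫ x, (1 - η x (h2 x)) ∂μ) + c := by
    simp [cascadeRisk]
  refine ⟨?_, htrue⟩
  intro r hr
  rw [htrue]
  have hs : MeasurableSet {x | r x = true} := hr (measurableSet_singleton true)
  have hpw : ∀ (u v : X → ℝ), Integrable u μ → Integrable v μ →
      Integrable (fun x => if r x then u x else v x) μ := by
    intro u v hu hv
    have := MeasureTheory.Integrable.piecewise hs
      (hu.integrableOn (s := {x | r x = true}))
      (hv.integrableOn (s := {x | r x = true}ᶜ))
    exact this
  have hA : Integrable (fun x => if r x then (0:ℝ) else 1 - η x (h1 x)) μ :=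
    hpw _ _ (integrable_const 0) hint1
  have hB : Integrable (fun x => if r x then 1 - η x (h2 x) else (0:ℝ)) μ :=
    hpw _ _ hint2 (integrable_const 0)
  have hC : Integrable (fun x => if r x then c else (0:ℝ)) μ :=
    hpw _ _ (integrable_const c) (integrable_const 0)
  have hCeq : c * (μ {x | r x = true}).toReal
      = ∫ x, (if r x then c else 0) ∂μ := by
    have : (∫ x, (if r x then c else 0) ∂μ)
        = ∫ x, Set.indicator {x | r x = true} (fun _ => c) x ∂μ := by
      apply integral_congr_ae
      filter_upwards with x
      by_cases h : r x = true <;> simp [Set.indicator, h]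
    rw [this, integral_indicator hs, setIntegral_const, smul_eq_mul, mul_comm]
    rfl
  have hrisk : cascadeRisk μ η h1 h2 c r
      = ∫ x, (if r x then 1 - η x (h2 x) + c else 1 - η x (h1 x)) ∂μ := by
    have key : (∫ x, (if r x then 1 - η x (h2 x) + c else 1 - η x (h1 x)) ∂μ)
        = ∫ x, ((if r x then (0:ℝ) else 1 - η x (h1 x))
            + (if r x then 1 - η x (h2 x) else 0)
            + (if r x then c else 0)) ∂μ := by
      apply integral_congr_ae
      filter_upwards with x
      by_cases h : r x = true <;> simp [h]
    have hAB : Integrable (fun x => (if r x then (0:ℝ) else 1 - η x (h1 x))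
        + (if r x then 1 - η x (h2 x) else 0)) μ := hA.add hB
    rw [cascadeRisk, hCeq, key, integral_add hAB hC, integral_add hA hB]
  rw [hrisk]
  have hLHS : (∫ x, (1 - η x (h2 x)) ∂μ) + c
      = ∫ x, (1 - η x (h2 x) + c) ∂μ := by
    rw [integral_add hint2 (integrable_const c), integral_const]
    simp
  rw [hLHS]
  apply integral_mono_ae (hint2.add (integrable_const c))
    (hpw _ _ (hint2.add (integrable_const c)) hint1)
  filter_upwards [hlarge] with x hx
  by_cases h : r x = true <;> simp [h] <;> linarith
end

section
/- Among all deferral rules r with fixed deferral rate Pr(r(x)=1) = τ, assuming x has a marginal distribution under which β(x) = η_{h2(x)}(x) − η_{h1(x)}(x) has a continuous distribution, the rule that defers on the set {x : β(x) > t_τ} (where t_τ is the (1−τ)-quantile of β(x)) maximizes cascade accuracy A(r) = Pr(h1(x)=y) + E[r(x) β(x)]. -/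
open MeasureTheory
open scoped Classical

/-- Cascade accuracy of a deferral rule. -/
noncomputable def cascadeAccuracy {X : Type*} [MeasurableSpace X] {L : ℕ}
    (μ : Measure X) (η : X → Fin L → ℝ) (h1 h2 : X → Fin L)
    (r : X → Bool) : ℝ :=
  ∫ x, (if r x then η x (h2 x) else η x (h1 x)) ∂μ

lemma integrable_of_bounded_meas {X : Type*} [MeasurableSpace X]
    (μ : Measure X) [IsProbabilityMeasure μ] (f : X → ℝ) (hf : Measurable f)
    (C : ℝ) (hb : ∀ x, |f x| ≤ C) : Integrable f μ := by
  refine Integrable.mono' (integrable_const C) hf.aestronglyMeasurable ?_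
  filter_upwards with x using hb x

/-- Among all deferral rules with fixed deferral rate `τ`, the rule deferring on the
super-level set `{x : β(x) > t_τ}` (with `Pr(β(x) > t_τ) = τ`, which exists when
`β(x) = η_{h2(x)}(x) − η_{h1(x)}(x)` has a continuous distribution) maximizes
cascade accuracy. -/
theorem threshold_rule_optimal_at_fixed_rate
    {X : Type*} [MeasurableSpace X] {L : ℕ}
    (μ : Measure X) [IsProbabilityMeasure μ]
    (η : X → Fin L → ℝ) (h1 h2 : X → Fin L)
    (hη : ∀ x y, η x y ∈ Set.Icc (0 : ℝ) 1)
    (hη1 : Measurable fun x => η x (h1 x))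
    (hη2 : Measurable fun x => η x (h2 x))
    (τ : ℝ) (hτ : τ ∈ Set.Icc (0 : ℝ) 1)
    (t : ℝ)
    (ht : (μ {x | η x (h2 x) - η x (h1 x) > t}).toReal = τ) :
    ∀ r : X → Bool, Measurable r →
      (μ {x | r x = true}).toReal = τ →
      cascadeAccuracy μ η h1 h2 r
        ≤ cascadeAccuracy μ η h1 h2
            (fun x => if η x (h2 x) - η x (h1 x) > t then true else false) := by
  intro r hr hrτ
  set β : X → ℝ := fun x => η x (h2 x) - η x (h1 x) with hβdef
  have hβ : Measurable β := hη2.sub hη1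
  have hβb : ∀ x, |β x| ≤ 1 := by
    intro x
    have a1 := hη x (h1 x); have a2 := hη x (h2 x)
    simp only [Set.mem_Icc] at a1 a2
    rw [abs_le]; constructor <;> simp [hβdef] <;> linarith
  have hS : MeasurableSet {x | β x > t} := measurableSet_lt measurable_const hβ
  have hR : MeasurableSet {x | r x = true} := hr (measurableSet_singleton true)
  -- indicator functions
  set i1 : X → ℝ := fun x => if β x > t then 1 else 0 with hi1
  set i2 : X → ℝ := fun x => if r x then 1 else 0 with hi2
  have hi1m : Measurable i1 := Measurable.ite hS measurable_const measurable_const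
  have hi2m : Measurable i2 := Measurable.ite hR measurable_const measurable_const
  have hi1b : ∀ x, |i1 x| ≤ 1 := by intro x; simp only [hi1]; split <;> simp
  have hi2b : ∀ x, |i2 x| ≤ 1 := by intro x; simp only [hi2]; split <;> simp
  have hi1int : Integrable i1 μ := integrable_of_bounded_meas μ i1 hi1m 1 hi1b
  have hi2int : Integrable i2 μ := integrable_of_bounded_meas μ i2 hi2m 1 hi2b
  -- integrals of indicators
  have hInt1 : ∫ x, i1 x ∂μ = τ := by
    have : i1 = Set.indicator {x | β x > t} (fun _ => (1:ℝ)) := by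
      funext x; simp [hi1, Set.indicator_apply, Set.mem_setOf_eq]
    rw [this, integral_indicator_const (1:ℝ) hS, smul_eq_mul, mul_one, measureReal_def, ht]
  have hInt2 : ∫ x, i2 x ∂μ = τ := by
    have : i2 = Set.indicator {x | r x = true} (fun _ => (1:ℝ)) := by
      funext x; simp [hi2, Set.indicator_apply, Set.mem_setOf_eq]
    rw [this, integral_indicator_const (1:ℝ) hR, smul_eq_mul, mul_one, measureReal_def, hrτ]
  -- the difference function
  set g : X → ℝ := fun x => (i1 x - i2 x) * (β x - t) with hg
  have hgm : Measurable g := (hi1m.sub hi2m).mul (hβ.sub measurable_const)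
  have hgb : ∀ x, |g x| ≤ 2 * (1 + |t|) := by
    intro x
    have : |g x| = |i1 x - i2 x| * |β x - t| := abs_mul _ _
    rw [this]
    have h1' : |i1 x - i2 x| ≤ 2 := by
      calc |i1 x - i2 x| ≤ |i1 x| + |i2 x| := abs_sub _ _
        _ ≤ 2 := by linarith [hi1b x, hi2b x]
    have h2' : |β x - t| ≤ 1 + |t| := by
      calc |β x - t| ≤ |β x| + |t| := abs_sub _ _
        _ ≤ 1 + |t| := by linarith [hβb x]
    exact mul_le_mul h1' h2' (abs_nonneg _) (by norm_num)
  have hgint : Integrable g μ := integrable_of_bounded_meas μ g hgm _ hgb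
  have hgpos : ∀ x, 0 ≤ g x := by
    intro x
    simp only [hg, hi1]
    by_cases h : β x > t
    · simp only [h, if_true]
      have : 0 ≤ β x - t := by linarith
      have h2 : 0 ≤ 1 - i2 x := by simp only [hi2]; split <;> norm_num
      exact mul_nonneg h2 this
    · simp only [h, if_false]
      push_neg at h
      have : β x - t ≤ 0 := by linarith
      have h2 : 0 - i2 x ≤ 0 := by simp only [hi2]; split <;> norm_num
      nlinarith
  -- F functions
  have keyF : ∀ x, (if (fun x => if β x > t then true else false) x then η x (h2 x) else η x (h1 x))
      - (if r x then η x (h2 x) else η x (h1 x)) = g x + t * (i1 x - i2 x) := by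
    intro x
    simp only [hg, hi1, hi2]
    by_cases h : β x > t <;> by_cases h' : r x = true <;>
      (simp only [hβdef] at h) <;> simp [h, h', hβdef] <;> ring
  have hF1m : Measurable (fun x => if r x then η x (h2 x) else η x (h1 x)) :=
    Measurable.ite hR hη2 hη1
  have hF2m : Measurable (fun x => if (if β x > t then true else false) = true then η x (h2 x) else η x (h1 x)) :=
    Measurable.ite (by simpa using hS) hη2 hη1
  have hFb : ∀ (f : X → Bool) (x : X), |(if f x then η x (h2 x) else η x (h1 x))| ≤ 1 := by
    intro f x
    have a1 := hη x (h1 x); have a2 := hη x (h2 x)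
    simp only [Set.mem_Icc] at a1 a2
    split <;> rw [abs_le] <;> constructor <;> linarith
  have hF1int : Integrable (fun x => if r x then η x (h2 x) else η x (h1 x)) μ :=
    integrable_of_bounded_meas μ _ hF1m 1 (hFb r)
  have hF2int : Integrable (fun x => if (fun x => if β x > t then true else false) x then η x (h2 x) else η x (h1 x)) μ :=
    integrable_of_bounded_meas μ _ hF2m 1 (hFb _)
  have hsub : cascadeAccuracy μ η h1 h2 (fun x => if β x > t then true else false)
      - cascadeAccuracy μ η h1 h2 r = ∫ x, g x + t * (i1 x - i2 x) ∂μ := by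
    rw [cascadeAccuracy, cascadeAccuracy, ← integral_sub hF2int hF1int]
    exact integral_congr_ae (Filter.Eventually.of_forall keyF)
  have hsplit : ∫ x, g x + t * (i1 x - i2 x) ∂μ
      = (∫ x, g x ∂μ) + t * ((∫ x, i1 x ∂μ) - (∫ x, i2 x ∂μ)) := by
    have hint2 : Integrable (fun x => t * (i1 x - i2 x)) μ := by
      have := (hi1int.sub hi2int).const_mul t
      exact this
    rw [integral_add hgint hint2, integral_const_mul, integral_sub hi1int hi2int]
  have : 0 ≤ cascadeAccuracy μ η h1 h2 (fun x => if β x > t then true else false)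
      - cascadeAccuracy μ η h1 h2 r := by
    rw [hsub, hsplit, hInt1, hInt2]
    have hnn : 0 ≤ ∫ x, g x ∂μ := integral_nonneg hgpos
    simpa using hnn
  simpa [hβdef] using sub_nonneg.mp this
end
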